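/- Consider the Emax model with parameters θ = (θ₁, θ₂, θ₃), θ₂ > 0, θ₃ > 0, on the design region [L,U] with 0 < L < U, and let x_E* = (L(U+θ₃) + U(L+θ₃))/(L + U + 2θ₃). The design ξ* that puts weight 1/4 at L, weight 1/2 at x_E*, and weight 1/4 at U has invertible information matrix M_{ξ*}, and for every design ξ on [L,U] whose information matrix M_ξ is invertible, (M_{ξ*}^{−1})₃₃ ≤ (M_ξ^{−1})₃₃; that is, ξ* is e₃-optimal (c-optimal for the parameter θ₃, equivalently ED_p-optimal). -/

import Mathlib

/-!
Elfving-type certificate. The Möbius map `q(x) = (L+U+2θ₃)(x - x*) / ((x+θ₃)(U-L))` sends `L, x*, U`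
to `-1, 0, 1` and `[L, U]` into `[-1, 1]`, and there is a vector `z` with `f(x)ᵀz = 2 q(x)² - 1`,
the Chebyshev polynomial `T₂` in `q`. So `|f(x)ᵀz| ≤ 1` on `[L, U]`, with values `1, -1, 1` at the
support of `ξ*`; hence `M_{ξ*} z = ¼ f(L) - ½ f(x*) + ¼ f(U)`, which is a multiple of `e₃`, and
`(M_{ξ*}⁻¹)₃₃ = z₃²`. For any design, `zᵀ M_ξ z = Σ ωᵢ (f(xᵢ)ᵀz)² ≤ 1`, and Cauchy–Schwarz for the
semi-inner product `M_ξ` gives `z₃² = (zᵀ M_ξ (M_ξ⁻¹ e₃))² ≤ (zᵀ M_ξ z) (e₃ᵀ M_ξ⁻¹ e₃) ≤ (M_ξ⁻¹)₃₃`.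
-/

structure Design (I : Set ℝ) where
  pts : Finset ℝ
  w : ℝ → ℝ
  mem_pts : ∀ x ∈ pts, x ∈ I
  w_nonneg : ∀ x ∈ pts, 0 ≤ w x
  w_sum : ∑ x ∈ pts, w x = 1

noncomputable def infoMat {d : ℕ} (M : ℝ → Matrix (Fin d) (Fin d) ℝ) {I : Set ℝ}
    (ξ : Design I) : Matrix (Fin d) (Fin d) ℝ :=
  ∑ x ∈ ξ.pts, ξ.w x • M x

/-- Gradient vector of the Emax model. -/
noncomputable def fEmax (θ₂ θ₃ : ℝ) (x : ℝ) : Fin 3 → ℝ :=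
  ![1, x / (x + θ₃), -θ₂ * x / (x + θ₃) ^ 2]

/-- Single-observation information matrix of the Emax model. -/
noncomputable def emaxInfo (θ₂ θ₃ : ℝ) (x : ℝ) : Matrix (Fin 3) (Fin 3) ℝ :=
  Matrix.vecMulVec (fEmax θ₂ θ₃ x) (fEmax θ₂ θ₃ x)

open Matrix

theorem Matrix.sum_smul_vecMulVec_self {m n R : Type*} [Fintype m] [DecidableEq m]
    [CommSemiring R] (F : Matrix m n R) (w : m → R) :
    ∑ i, w i • vecMulVec (F i) (F i) = Fᵀ * diagonal w * F := by
  ext j k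
  rw [mul_apply]
  simp only [mul_diagonal, transpose_apply, sum_apply, smul_apply, vecMulVec_apply,
    smul_eq_mul]
  exact Finset.sum_congr rfl fun i _ => by ring

section COptimality

variable {n : Type*} [Fintype n] [DecidableEq n] {M : Matrix n n ℝ}

theorem Matrix.PosSemidef.sq_dotProduct_le_mul_inv (hM : M.PosSemidef) (hdet : IsUnit M.det)
    (z c : n → ℝ) : (z ⬝ᵥ c) ^ 2 ≤ (z ⬝ᵥ M *ᵥ z) * (c ⬝ᵥ M⁻¹ *ᵥ c) := by
  set y := M⁻¹ *ᵥ c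
  have hMy : M *ᵥ y = c := by rw [mulVec_mulVec, mul_nonsing_inv _ hdet, one_mulVec]
  have hsymm : Mᵀ = M := by simpa using hM.isHermitian.eq
  have hyz : y ⬝ᵥ M *ᵥ z = z ⬝ᵥ c := by
    rw [dotProduct_mulVec, ← mulVec_transpose, hsymm, hMy, dotProduct_comm]
  have hCS := (toBilin' M).apply_mul_apply_le_of_forall_zero_le
    (fun x => by simpa [toBilin'_apply'] using hM.dotProduct_mulVec_nonneg x) z y
  simp only [toBilin'_apply', hMy, hyz] at hCS
  rwa [dotProduct_comm y c, ← sq] at hCS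

theorem Matrix.PosSemidef.sq_dotProduct_le_inv_of_le_one (hM : M.PosSemidef)
    (hdet : IsUnit M.det) {z : n → ℝ} (hz : z ⬝ᵥ M *ᵥ z ≤ 1) (c : n → ℝ) :
    (z ⬝ᵥ c) ^ 2 ≤ c ⬝ᵥ M⁻¹ *ᵥ c :=
  (hM.sq_dotProduct_le_mul_inv hdet z c).trans <|
    mul_le_of_le_one_left (by simpa using hM.inv.dotProduct_mulVec_nonneg c) hz

theorem dotProduct_inv_mulVec_eq_sq (hdet : IsUnit M.det) {z c : n → ℝ} {κ : ℝ}
    (hz : M *ᵥ z = κ • c) (hκ : κ * (z ⬝ᵥ c) = 1) :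
    c ⬝ᵥ M⁻¹ *ᵥ c = (z ⬝ᵥ c) ^ 2 := by
  have hinv : M⁻¹ *ᵥ c = (z ⬝ᵥ c) • z := by
    have hz' : κ • M⁻¹ *ᵥ c = z := by
      rw [← mulVec_smul, ← hz, mulVec_mulVec, nonsing_inv_mul _ hdet, one_mulVec]
    calc M⁻¹ *ᵥ c = (κ * (z ⬝ᵥ c)) • M⁻¹ *ᵥ c := by rw [hκ, one_smul]
      _ = (z ⬝ᵥ c) • (κ • M⁻¹ *ᵥ c) := by rw [smul_smul, mul_comm]
      _ = (z ⬝ᵥ c) • z := by rw [hz']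
  rw [hinv, dotProduct_smul, smul_eq_mul, dotProduct_comm, sq]

end COptimality

section Design

variable {d : ℕ} {I : Set ℝ} (g : ℝ → Fin d → ℝ) (ξ : Design I)

theorem posSemidef_infoMat_vecMulVec :
    (infoMat (fun x => vecMulVec (g x) (g x)) ξ).PosSemidef :=
  posSemidef_sum _ fun x hx => by
    simpa using (posSemidef_vecMulVec_self_star (g x)).smul (ξ.w_nonneg x hx)

theorem dotProduct_infoMat_vecMulVec_mulVec (z : Fin d → ℝ) :
    z ⬝ᵥ infoMat (fun x => vecMulVec (g x) (g x)) ξ *ᵥ z =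
      ∑ x ∈ ξ.pts, ξ.w x * (g x ⬝ᵥ z) ^ 2 := by
  simp only [infoMat, sum_mulVec, dotProduct_sum, smul_mulVec, vecMulVec_mulVec, op_smul_eq_smul,
    dotProduct_smul, smul_eq_mul]
  simp only [dotProduct_comm z, sq]

theorem sq_dotProduct_le_infoMat_inv {z : Fin d → ℝ} (hz : ∀ x ∈ I, (g x ⬝ᵥ z) ^ 2 ≤ 1)
    (hdet : IsUnit (infoMat (fun x => vecMulVec (g x) (g x)) ξ).det) (c : Fin d → ℝ) :
    (z ⬝ᵥ c) ^ 2 ≤ c ⬝ᵥ (infoMat (fun x => vecMulVec (g x) (g x)) ξ)⁻¹ *ᵥ c := by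
  refine (posSemidef_infoMat_vecMulVec g ξ).sq_dotProduct_le_inv_of_le_one hdet ?_ c
  rw [dotProduct_infoMat_vecMulVec_mulVec, ← ξ.w_sum]
  exact Finset.sum_le_sum fun x hx =>
    mul_le_of_le_one_right (ξ.w_nonneg x hx) (hz x (ξ.mem_pts x hx))

end Design

section Emax

variable {θ₂ θ₃ L U : ℝ}

noncomputable def emaxMid (θ₃ L U : ℝ) : ℝ :=
  (L * (U + θ₃) + U * (L + θ₃)) / (L + U + 2 * θ₃)

noncomputable def emaxOptInfo (θ₂ θ₃ L U : ℝ) : Matrix (Fin 3) (Fin 3) ℝ :=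
  (1 / 4 : ℝ) • emaxInfo θ₂ θ₃ L + (1 / 2 : ℝ) • emaxInfo θ₂ θ₃ (emaxMid θ₃ L U) +
    (1 / 4 : ℝ) • emaxInfo θ₂ θ₃ U

-- the map `q` of the header
noncomputable def emaxCoord (θ₃ L U x : ℝ) : ℝ :=
  ((L + U + 2 * θ₃) * x - (2 * L * U + θ₃ * (L + U))) / ((x + θ₃) * (U - L))

-- the vector `z` of the header, the solution of `f(L)ᵀz = f(U)ᵀz = 1`, `f(x*)ᵀz = -1`
noncomputable def emaxCert (θ₂ θ₃ L U : ℝ) : Fin 3 → ℝ :=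
  ![(2 * (2 * L * U + θ₃ * (L + U)) ^ 2 - θ₃ ^ 2 * (U - L) ^ 2) / (θ₃ ^ 2 * (U - L) ^ 2),
    8 * (θ₃ ^ 2 - L * U) * ((L + θ₃) * (U + θ₃)) / (θ₃ ^ 2 * (U - L) ^ 2),
    8 * ((L + θ₃) * (U + θ₃)) ^ 2 / (θ₂ * θ₃ * (U - L) ^ 2)]

theorem fEmax_dotProduct_emaxCert (hθ₂ : θ₂ ≠ 0) (hθ₃ : θ₃ ≠ 0) (hLU : L ≠ U) {x : ℝ}
    (hx : x + θ₃ ≠ 0) :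
    fEmax θ₂ θ₃ x ⬝ᵥ emaxCert θ₂ θ₃ L U = 2 * emaxCoord θ₃ L U x ^ 2 - 1 := by
  have hUL : U - L ≠ 0 := sub_ne_zero.mpr hLU.symm
  simp only [fEmax, emaxCert, emaxCoord, dotProduct, Fin.sum_univ_three, cons_val_zero,
    cons_val_one, cons_val_two, head_cons, tail_cons]
  field_simp
  ring

theorem emaxCoord_sq_le_one (hLθ : 0 < L + θ₃) (hLU : L < U) {x : ℝ} (hx : x ∈ Set.Icc L U) :
    emaxCoord θ₃ L U x ^ 2 ≤ 1 := by
  obtain ⟨hLx, hxU⟩ := hx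
  have hUθ : 0 ≤ U + θ₃ := by linarith
  have hden : 0 < (x + θ₃) * (U - L) := by nlinarith
  rw [emaxCoord, div_pow, div_le_one (by positivity)]
  -- the denominator minus / plus the numerator is `2 (U - x)(L + θ₃)` / `2 (x - L)(U + θ₃)`
  apply sq_le_sq' <;>
    nlinarith [mul_nonneg (sub_nonneg.mpr hxU) hLθ.le, mul_nonneg (sub_nonneg.mpr hLx) hUθ]

theorem emaxCoord_left (hLθ : L + θ₃ ≠ 0) (hLU : L ≠ U) : emaxCoord θ₃ L U L = -1 := by
  have hUL : U - L ≠ 0 := sub_ne_zero.mpr hLU.symm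
  rw [emaxCoord]; field_simp; ring

theorem emaxCoord_right (hUθ : U + θ₃ ≠ 0) (hLU : L ≠ U) : emaxCoord θ₃ L U U = 1 := by
  have hUL : U - L ≠ 0 := sub_ne_zero.mpr hLU.symm
  rw [emaxCoord]; field_simp; ring

theorem emaxCoord_emaxMid (hD : L + U + 2 * θ₃ ≠ 0) :
    emaxCoord θ₃ L U (emaxMid θ₃ L U) = 0 := by
  rw [emaxCoord, emaxMid, div_eq_zero_iff]; left; field_simp; ring

theorem emaxMid_add (hD : L + U + 2 * θ₃ ≠ 0) :
    emaxMid θ₃ L U + θ₃ = 2 * ((L + θ₃) * (U + θ₃)) / (L + U + 2 * θ₃) := by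
  rw [emaxMid, eq_div_iff hD, add_mul, div_mul_cancel₀ _ hD]; ring

theorem emaxMid_mem_Ioo (hθ₃ : 0 < θ₃) (hL : 0 < L) (hLU : L < U) :
    emaxMid θ₃ L U ∈ Set.Ioo L U := by
  rw [emaxMid, Set.mem_Ioo, lt_div_iff₀ (by linarith), div_lt_iff₀ (by linarith)]
  constructor <;> nlinarith

theorem sq_fEmax_dotProduct_emaxCert_le_one (hθ₂ : 0 < θ₂) (hθ₃ : 0 < θ₃) (hL : 0 < L)
    (hLU : L < U) {x : ℝ} (hx : x ∈ Set.Icc L U) :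
    (fEmax θ₂ θ₃ x ⬝ᵥ emaxCert θ₂ θ₃ L U) ^ 2 ≤ 1 := by
  rw [fEmax_dotProduct_emaxCert hθ₂.ne' hθ₃.ne' hLU.ne (by linarith [hx.1])]
  have hq := emaxCoord_sq_le_one (θ₃ := θ₃) (by linarith) hLU hx
  nlinarith [sq_nonneg (emaxCoord θ₃ L U x)]

theorem emaxCert_two_pos (hθ₂ : 0 < θ₂) (hθ₃ : 0 < θ₃) (hL : 0 < L) (hLU : L < U) :
    0 < emaxCert θ₂ θ₃ L U 2 := by
  have hLθ : 0 < L + θ₃ := by linarith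
  have hUθ : 0 < U + θ₃ := by linarith
  have hUL : 0 < U - L := by linarith
  simp only [emaxCert, cons_val_two, tail_cons, head_cons]
  positivity

theorem emaxInfo_mulVec (x : ℝ) (v : Fin 3 → ℝ) :
    emaxInfo θ₂ θ₃ x *ᵥ v = (fEmax θ₂ θ₃ x ⬝ᵥ v) • fEmax θ₂ θ₃ x := by
  rw [emaxInfo, vecMulVec_mulVec, op_smul_eq_smul]

theorem emaxOptInfo_mulVec_emaxCert (hθ₂ : 0 < θ₂) (hθ₃ : 0 < θ₃) (hL : 0 < L) (hLU : L < U) :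
    emaxOptInfo θ₂ θ₃ L U *ᵥ emaxCert θ₂ θ₃ L U = (emaxCert θ₂ θ₃ L U 2)⁻¹ • Pi.single 2 1 := by
  have hD : L + U + 2 * θ₃ ≠ 0 := by linarith
  have hmid := emaxMid_mem_Ioo hθ₃ hL hLU
  simp only [emaxOptInfo, add_mulVec, smul_mulVec, emaxInfo_mulVec]
  rw [fEmax_dotProduct_emaxCert hθ₂.ne' hθ₃.ne' hLU.ne (by linarith),
    fEmax_dotProduct_emaxCert hθ₂.ne' hθ₃.ne' hLU.ne (by linarith [hmid.1]),
    fEmax_dotProduct_emaxCert hθ₂.ne' hθ₃.ne' hLU.ne (by linarith),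
    emaxCoord_left (by linarith) hLU.ne, emaxCoord_right (by linarith) hLU.ne, emaxCoord_emaxMid hD]
  have hx : emaxMid θ₃ L U = 2 * ((L + θ₃) * (U + θ₃)) / (L + U + 2 * θ₃) - θ₃ := by
    rw [← emaxMid_add hD, add_sub_cancel_right]
  have hLθ : L + θ₃ ≠ 0 := by linarith
  have hUθ : U + θ₃ ≠ 0 := by linarith
  have hUL : U - L ≠ 0 := by linarith
  have hθ₂' := hθ₂.ne'
  have hθ₃' := hθ₃.ne'
  rw [hx]
  ext i
  fin_cases i <;>
    simp only [Pi.add_apply, Pi.smul_apply, smul_eq_mul, fEmax, emaxCert, Fin.zero_eta, Fin.mk_one,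
      Fin.reduceFinMk, cons_val_zero, cons_val_one, cons_val_two, head_cons, tail_cons,
      Pi.single_apply, Fin.reduceEq, if_false, if_true] <;>
    field_simp <;> ring

theorem det_of_fEmax {a b c : ℝ} (ha : a + θ₃ ≠ 0) (hb : b + θ₃ ≠ 0) (hc : c + θ₃ ≠ 0) :
    (of ![fEmax θ₂ θ₃ a, fEmax θ₂ θ₃ b, fEmax θ₂ θ₃ c]).det =
      θ₂ * θ₃ ^ 2 * ((b - a) * (c - a) * (c - b)) / ((a + θ₃) * (b + θ₃) * (c + θ₃)) ^ 2 := by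
  rw [det_fin_three]
  simp only [fEmax, of_apply, cons_val_zero, cons_val_one, cons_val_two, head_cons, tail_cons]
  field_simp
  ring

theorem isUnit_det_emaxInfo_threePoint (hθ₂ : θ₂ ≠ 0) (hθ₃ : θ₃ ≠ 0) {w₁ w₂ w₃ a b c : ℝ}
    (hw₁ : w₁ ≠ 0) (hw₂ : w₂ ≠ 0) (hw₃ : w₃ ≠ 0) (hab : a ≠ b) (hac : a ≠ c) (hbc : b ≠ c)
    (ha : a + θ₃ ≠ 0) (hb : b + θ₃ ≠ 0) (hc : c + θ₃ ≠ 0) :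
    IsUnit (w₁ • emaxInfo θ₂ θ₃ a + w₂ • emaxInfo θ₂ θ₃ b + w₃ • emaxInfo θ₂ θ₃ c).det := by
  set F := of ![fEmax θ₂ θ₃ a, fEmax θ₂ θ₃ b, fEmax θ₂ θ₃ c]
  have hgram : w₁ • emaxInfo θ₂ θ₃ a + w₂ • emaxInfo θ₂ θ₃ b + w₃ • emaxInfo θ₂ θ₃ c =
      Fᵀ * diagonal ![w₁, w₂, w₃] * F := by
    rw [← sum_smul_vecMulVec_self, Fin.sum_univ_three]
    rfl
  rw [hgram, det_mul, det_mul, det_transpose, det_diagonal, Fin.prod_univ_three,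
    det_of_fEmax ha hb hc, isUnit_iff_ne_zero]
  simp [*, sub_ne_zero, Ne.symm]

theorem isUnit_det_emaxOptInfo (hθ₂ : 0 < θ₂) (hθ₃ : 0 < θ₃) (hL : 0 < L) (hLU : L < U) :
    IsUnit (emaxOptInfo θ₂ θ₃ L U).det := by
  have hmid := emaxMid_mem_Ioo hθ₃ hL hLU
  exact isUnit_det_emaxInfo_threePoint hθ₂.ne' hθ₃.ne' (by norm_num) (by norm_num) (by norm_num)
    hmid.1.ne hLU.ne hmid.2.ne (by linarith) (by linarith [hmid.1]) (by linarith)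

end Emax

theorem stmt11_general (θ₂ θ₃ : ℝ) (hθ₂ : 0 < θ₂) (hθ₃ : 0 < θ₃) (L U : ℝ)
    (hL : 0 < L) (hLU : L < U) :
    IsUnit ((1 / 4 : ℝ) • emaxInfo θ₂ θ₃ L +
        (1 / 2 : ℝ) • emaxInfo θ₂ θ₃ ((L * (U + θ₃) + U * (L + θ₃)) / (L + U + 2 * θ₃)) +
        (1 / 4 : ℝ) • emaxInfo θ₂ θ₃ U).det ∧
    ∀ ξ : Design (Set.Icc L U), IsUnit (infoMat (emaxInfo θ₂ θ₃) ξ).det →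
      ((1 / 4 : ℝ) • emaxInfo θ₂ θ₃ L +
        (1 / 2 : ℝ) • emaxInfo θ₂ θ₃ ((L * (U + θ₃) + U * (L + θ₃)) / (L + U + 2 * θ₃)) +
        (1 / 4 : ℝ) • emaxInfo θ₂ θ₃ U)⁻¹ 2 2 ≤
      (infoMat (emaxInfo θ₂ θ₃) ξ)⁻¹ 2 2 := by
  change IsUnit (emaxOptInfo θ₂ θ₃ L U).det ∧ ∀ ξ : Design (Set.Icc L U),
    IsUnit (infoMat (emaxInfo θ₂ θ₃) ξ).det →
      (emaxOptInfo θ₂ θ₃ L U)⁻¹ 2 2 ≤ (infoMat (emaxInfo θ₂ θ₃) ξ)⁻¹ 2 2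
  have hunit := isUnit_det_emaxOptInfo hθ₂ hθ₃ hL hLU
  refine ⟨hunit, fun ξ hξ => ?_⟩
  have hentry (A : Matrix (Fin 3) (Fin 3) ℝ) : A 2 2 = Pi.single 2 1 ⬝ᵥ A *ᵥ Pi.single 2 1 := by
    simp
  rw [hentry (emaxOptInfo θ₂ θ₃ L U)⁻¹, hentry (infoMat (emaxInfo θ₂ θ₃) ξ)⁻¹,
    dotProduct_inv_mulVec_eq_sq hunit (emaxOptInfo_mulVec_emaxCert hθ₂ hθ₃ hL hLU)
      (by rw [dotProduct_single, mul_one, inv_mul_cancel₀ (emaxCert_two_pos hθ₂ hθ₃ hL hLU).ne'])]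
  exact sq_dotProduct_le_infoMat_inv (fEmax θ₂ θ₃) ξ
    (fun x hx => sq_fEmax_dotProduct_emaxCert_le_one hθ₂ hθ₃ hL hLU hx) hξ _

/-- the design with weights (1/4, 1/2, 1/4) at `L`, `x_E*`, `U` is
e₃-optimal (c-optimal for θ₃) for the Emax model. -/
theorem stmt11 (θ₁ θ₂ θ₃ : ℝ) (hθ₂ : 0 < θ₂) (hθ₃ : 0 < θ₃) (L U : ℝ)
    (hL : 0 < L) (hLU : L < U) :
    IsUnit ((1 / 4 : ℝ) • emaxInfo θ₂ θ₃ L +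
        (1 / 2 : ℝ) • emaxInfo θ₂ θ₃ ((L * (U + θ₃) + U * (L + θ₃)) / (L + U + 2 * θ₃)) +
        (1 / 4 : ℝ) • emaxInfo θ₂ θ₃ U).det ∧
    ∀ ξ : Design (Set.Icc L U), IsUnit (infoMat (emaxInfo θ₂ θ₃) ξ).det →
      ((1 / 4 : ℝ) • emaxInfo θ₂ θ₃ L +
        (1 / 2 : ℝ) • emaxInfo θ₂ θ₃ ((L * (U + θ₃) + U * (L + θ₃)) / (L + U + 2 * θ₃)) +
        (1 / 4 : ℝ) • emaxInfo θ₂ θ₃ U)⁻¹ 2 2 ≤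
      (infoMat (emaxInfo θ₂ θ₃) ξ)⁻¹ 2 2 :=
  stmt11_general θ₂ θ₃ hθ₂ hθ₃ L U hL hLU
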